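/- There exists a constant δ₃ > 0 such that for every smooth map φ : ℝ² → ℝ², 2-periodic in each variable, with ‖∇φ‖_{2,2} ≤ δ₃ (where ‖∇φ‖_{2,2}² := ‖∇φ‖₁² + ‖∇∂₂∇φ‖₀², norms over the periodic cell (-1,1)²), one has det(∇φ + I) > 1/2 everywhere and the map ψ := φ + id : ℝ² → ℝ² is a C¹ homeomorphism of ℝ², i.e. ψ is a bijection of ℝ² onto itself which is C¹ and has a continuous inverse. -/

import Mathlib

open MeasureTheory

noncomputable section

/-- A point of the plane `ℝ²`. -/
abbrev Pt := ℝ × ℝ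

/-- The periodic cell `(-1,1)²`. -/
def cell : Set Pt := Set.Ioo (-1 : ℝ) 1 ×ˢ Set.Ioo (-1 : ℝ) 1

/-- `f` is 2-periodic in each variable. -/
def Periodic2 (f : Pt → ℝ) : Prop :=
  (∀ y : Pt, f (y.1 + 2, y.2) = f y) ∧ ∀ y : Pt, f (y.1, y.2 + 2) = f y

/-- Partial derivative in the first variable. -/
def p1 (f : Pt → ℝ) : Pt → ℝ := fun y => fderiv ℝ f y (1, 0)

/-- Partial derivative in the second variable. -/
def p2 (f : Pt → ℝ) : Pt → ℝ := fun y => fderiv ℝ f y (0, 1)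

/-- Iterated partial derivative `∂₁^a ∂₂^b f`. -/
def pd (a b : ℕ) (f : Pt → ℝ) : Pt → ℝ := p1^[a] (p2^[b] f)

/-- Square of the `L²((-1,1)²)` norm. -/
def L2sq (f : Pt → ℝ) : ℝ := ∫ y in cell, (f y) ^ 2

/-- The `L²((-1,1)²)` norm `‖f‖₀`. -/
def L2 (f : Pt → ℝ) : ℝ := Real.sqrt (L2sq f)

/-- Square of the Sobolev norm `‖f‖_i² = Σ_{|α| ≤ i} ‖∂^α f‖₀²`. -/
def sobSq (i : ℕ) (f : Pt → ℝ) : ℝ :=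
  ∑ a ∈ Finset.range (i + 1), ∑ b ∈ Finset.range (i + 1 - a), L2sq (pd a b f)

/-- The Sobolev norm `‖f‖_i`. -/
def sob (i : ℕ) (f : Pt → ℝ) : ℝ := Real.sqrt (sobSq i f)

/-- Square of the homogeneous seminorm `‖∇^i f‖₀² = Σ_{|α| = i} ‖∂^α f‖₀²`. -/
def gradSq (i : ℕ) (f : Pt → ℝ) : ℝ :=
  ∑ a ∈ Finset.range (i + 1), L2sq (pd a (i - a) f)

/-- First component of a map `ℝ² → ℝ²`. -/
def comp1 (v : Pt → Pt) : Pt → ℝ := fun y => (v y).1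

/-- Second component of a map `ℝ² → ℝ²`. -/
def comp2 (v : Pt → Pt) : Pt → ℝ := fun y => (v y).2

/-- Square of the norm `‖∇φ‖_{2,2}² = ‖∇φ‖₁² + ‖∇∂₂∇φ‖₀²`, entries of the Jacobian
matrix summed. -/
def gradNorm22Sq (φ : Pt → Pt) : ℝ :=
  (sobSq 1 (p1 (comp1 φ)) + gradSq 1 (p2 (p1 (comp1 φ))))
    + (sobSq 1 (p2 (comp1 φ)) + gradSq 1 (p2 (p2 (comp1 φ))))
    + (sobSq 1 (p1 (comp2 φ)) + gradSq 1 (p2 (p1 (comp2 φ))))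
    + (sobSq 1 (p2 (comp2 φ)) + gradSq 1 (p2 (p2 (comp2 φ))))

/-!
For a periodic function `v` on `ℝ`, comparing `v x` with its values over one period gives
`v x ≤ (mean of v) + ∫ |v'|`; applied to `v²` this bounds `v x ^ 2` by `∫ (3/2 v² + v'²)`.
Using this bound in the second variable and then, on each term, in the first, every smooth
periodic `g` satisfies `g² ≤ 9/4 (‖g‖₀² + ‖∂₁g‖₀² + ‖∂₂g‖₀² + ‖∂₁∂₂g‖₀²)` pointwise. For the
entries `g` of `∇φ` these four terms are part of `‖∇φ‖_{2,2}²`, so `‖∇φ‖_{2,2} ≤ 1/10` makes every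
entry at most `3/20` in absolute value. This bounds the determinant from below and makes `φ`
Lipschitz with constant `3/10 < 1`, so `φ + id` is a homeomorphism of `ℝ²`.
-/

namespace Function.Periodic

open intervalIntegral

variable {v v' : ℝ → ℝ} {T : ℝ}

lemma le_inv_mul_intervalIntegral_add (hv : Periodic v T) (hT : 0 < T)
    (hd : ∀ x, HasDerivAt v (v' x) x) (hv' : Continuous v') (a x : ℝ) :
    v x ≤ T⁻¹ * (∫ s in a..a + T, v s) + ∫ s in a..a + T, |v' s| := by
  have hcont : Continuous v := continuous_iff_continuousAt.2 fun t => (hd t).continuousAt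
  have hper' : Periodic v' T := fun t =>
    ((hd (t + T)).comp_add_const t T |>.congr_of_eventuallyEq
      (Filter.Eventually.of_forall fun s => (hv s).symm)).unique (hd t)
  have hper_abs : Periodic (fun s => |v' s|) T := fun t => by simp only [hper' t]
  have hvar : ∀ s ∈ Set.Icc (x - T) x, v x ≤ v s + ∫ t in (x - T)..x, |v' t| := by
    intro s ⟨hs₁, hs₂⟩
    have hftc : ∫ t in s..x, v' t = v x - v s :=
      integral_eq_sub_of_hasDerivAt (fun t _ => hd t) (hv'.intervalIntegrable s x)
    have h₁ : ∫ t in s..x, v' t ≤ ∫ t in s..x, |v' t| :=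
      integral_mono_on hs₂ (hv'.intervalIntegrable s x) (hv'.abs.intervalIntegrable s x)
        fun t _ => le_abs_self _
    have h₂ : ∫ t in s..x, |v' t| ≤ ∫ t in (x - T)..x, |v' t| :=
      integral_mono_interval hs₁ hs₂ le_rfl
        (Filter.Eventually.of_forall fun t => abs_nonneg _) (hv'.abs.intervalIntegrable _ _)
    linarith
  have hmean : ∫ _ in (x - T)..x, v x ≤ ∫ s in (x - T)..x, (v s + ∫ t in (x - T)..x, |v' t|) :=
    integral_mono_on (by linarith) intervalIntegrable_const
      ((hcont.intervalIntegrable _ _).add intervalIntegrable_const) hvar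
  rw [intervalIntegral.integral_const, integral_add (hcont.intervalIntegrable _ _)
    intervalIntegrable_const, intervalIntegral.integral_const, smul_eq_mul, smul_eq_mul,
    sub_sub_cancel] at hmean
  have hshift : ∀ {g : ℝ → ℝ}, Periodic g T → ∫ s in (x - T)..x, g s = ∫ s in a..a + T, g s :=
    fun hg => by simpa using hg.intervalIntegral_add_eq (x - T) a
  rw [hshift hv, hshift hper_abs] at hmean
  have hmean' : v x - ∫ s in a..a + T, |v' s| ≤ T⁻¹ * ∫ s in a..a + T, v s := by
    rw [inv_mul_eq_div, le_div_iff₀' hT]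
    linarith
  linarith

lemma sq_le_intervalIntegral (hv : Periodic v T) (hT : 0 < T)
    (hd : ∀ x, HasDerivAt v (v' x) x) (hv' : Continuous v') (a x : ℝ) :
    v x ^ 2 ≤ ∫ s in a..a + T, ((T⁻¹ + 1) * v s ^ 2 + v' s ^ 2) := by
  have hcont : Continuous v := continuous_iff_continuousAt.2 fun t => (hd t).continuousAt
  have hsq : Periodic (fun s => v s ^ 2) T := fun s => by simp only [hv s]
  have hd₂ : ∀ x, HasDerivAt (fun s => v s ^ 2) (2 * v x * v' x) x := fun x => by
    simpa using (hd x).fun_pow 2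
  have hbound := hsq.le_inv_mul_intervalIntegral_add hT hd₂
    ((continuous_const.mul hcont).mul hv') a x
  have hamgm : ∫ s in a..a + T, |2 * v s * v' s| ≤ ∫ s in a..a + T, (v s ^ 2 + v' s ^ 2) :=
    integral_mono_on (by linarith) (Continuous.intervalIntegrable (by fun_prop) _ _)
      (Continuous.intervalIntegrable (by fun_prop) _ _) fun s _ =>
      abs_le.2 ⟨by nlinarith [sq_nonneg (v s + v' s)], by nlinarith [sq_nonneg (v s - v' s)]⟩
  calc v x ^ 2 ≤ T⁻¹ * (∫ s in a..a + T, v s ^ 2) + ∫ s in a..a + T, (v s ^ 2 + v' s ^ 2) := by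
        linarith
    _ = ∫ s in a..a + T, ((T⁻¹ + 1) * v s ^ 2 + v' s ^ 2) := by
        rw [← intervalIntegral.integral_const_mul, ← integral_add
          (Continuous.intervalIntegrable (by fun_prop) _ _)
          (Continuous.intervalIntegrable (by fun_prop) _ _)]
        congr 1
        ext s
        ring

end Function.Periodic

lemma hasDerivAt_p1_slice {f : Pt → ℝ} (hf : Differentiable ℝ f) (t s : ℝ) :
    HasDerivAt (fun t' => f (t', s)) (p1 f (t, s)) t :=
  (hf (t, s)).hasFDerivAt.comp_hasDerivAt t ((hasDerivAt_id t).prodMk (hasDerivAt_const t s))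

lemma hasDerivAt_p2_slice {f : Pt → ℝ} (hf : Differentiable ℝ f) (t s : ℝ) :
    HasDerivAt (fun s' => f (t, s')) (p2 f (t, s)) s :=
  (hf (t, s)).hasFDerivAt.comp_hasDerivAt s ((hasDerivAt_const s t).prodMk (hasDerivAt_id s))

namespace ContDiff

variable {f : Pt → ℝ} {m n : WithTop ℕ∞}

lemma p1 (hf : ContDiff ℝ n f) (hmn : m + 1 ≤ n) : ContDiff ℝ m (p1 f) :=
  (hf.fderiv_right hmn).clm_apply contDiff_const

lemma p2 (hf : ContDiff ℝ n f) (hmn : m + 1 ≤ n) : ContDiff ℝ m (p2 f) :=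
  (hf.fderiv_right hmn).clm_apply contDiff_const

end ContDiff

namespace Periodic2

variable {f : Pt → ℝ}

lemma fderiv_eq (hp : Periodic2 f) (y : Pt) :
    fderiv ℝ f (y.1 + 2, y.2) = fderiv ℝ f y ∧ fderiv ℝ f (y.1, y.2 + 2) = fderiv ℝ f y := by
  have hshift : ∀ c : Pt, (∀ z, f (z + c) = f z) → fderiv ℝ f (y + c) = fderiv ℝ f y :=
    fun c hc => by rw [← fderiv_comp_add_right, funext hc]
  have e₁ : ∀ z : Pt, z + (2, 0) = (z.1 + 2, z.2) := fun z => by ext <;> simp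
  have e₂ : ∀ z : Pt, z + (0, 2) = (z.1, z.2 + 2) := fun z => by ext <;> simp
  exact ⟨e₁ y ▸ hshift _ fun z => e₁ z ▸ hp.1 z, e₂ y ▸ hshift _ fun z => e₂ z ▸ hp.2 z⟩

lemma p1 (hp : Periodic2 f) : Periodic2 (p1 f) :=
  ⟨fun y => by simp only [_root_.p1, (hp.fderiv_eq y).1],
    fun y => by simp only [_root_.p1, (hp.fderiv_eq y).2]⟩

lemma p2 (hp : Periodic2 f) : Periodic2 (p2 f) :=
  ⟨fun y => by simp only [_root_.p2, (hp.fderiv_eq y).1],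
    fun y => by simp only [_root_.p2, (hp.fderiv_eq y).2]⟩

end Periodic2

lemma Continuous.integrableOn_cell {g : Pt → ℝ} (hg : Continuous g) : IntegrableOn g cell :=
  (hg.continuousOn.integrableOn_compact (isCompact_Icc.prod isCompact_Icc)).mono_set
    (Set.prod_mono Set.Ioo_subset_Icc_self Set.Ioo_subset_Icc_self)

lemma integral_cell_eq_intervalIntegral {g : Pt → ℝ} (hg : Continuous g) :
    ∫ y in cell, g y = ∫ s in (-1 : ℝ)..1, ∫ t in (-1 : ℝ)..1, g (t, s) := by
  have hIoo : ∀ F : ℝ → ℝ, ∫ u in (-1 : ℝ)..1, F u = ∫ u in Set.Ioo (-1 : ℝ) 1, F u := fun F => by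
    rw [intervalIntegral.integral_of_le (by norm_num), integral_Ioc_eq_integral_Ioo]
  have hswap : IntegrableOn (fun z : Pt => g z.swap) cell (volume.prod volume) := by
    rw [← Measure.volume_eq_prod]
    exact (hg.comp continuous_swap).integrableOn_cell
  simp_rw [hIoo]
  have hprod := setIntegral_prod _ hswap
  simp only [Prod.swap_prod_mk] at hprod
  rw [← hprod, cell, Measure.volume_eq_prod]
  simpa using (setIntegral_prod_swap (μ := volume) (ν := volume) (Set.Ioo (-1 : ℝ) 1)
    (Set.Ioo (-1 : ℝ) 1) (fun z : Pt => g z.swap))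

lemma sq_le_integral_slice1 {f : Pt → ℝ} (hp : Periodic2 f) (hf : ContDiff ℝ 1 f) (x s : ℝ) :
    f (x, s) ^ 2 ≤ ∫ t in (-1 : ℝ)..1, ((2⁻¹ + 1) * f (t, s) ^ 2 + p1 f (t, s) ^ 2) := by
  have h := Function.Periodic.sq_le_intervalIntegral (v := fun t => f (t, s))
    (fun t => hp.1 (t, s)) two_pos (hasDerivAt_p1_slice (hf.differentiable one_ne_zero) · s)
    ((hf.p1 (m := 0) (by simp)).continuous.comp (by fun_prop)) (-1) x
  norm_num at h ⊢
  exact h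

lemma sq_le_integral_slice2 {f : Pt → ℝ} (hp : Periodic2 f) (hf : ContDiff ℝ 1 f) (x s : ℝ) :
    f (x, s) ^ 2 ≤ ∫ t in (-1 : ℝ)..1, ((2⁻¹ + 1) * f (x, t) ^ 2 + p2 f (x, t) ^ 2) := by
  have h := Function.Periodic.sq_le_intervalIntegral (v := fun t => f (x, t))
    (fun t => hp.2 (x, t)) two_pos (hasDerivAt_p2_slice (hf.differentiable one_ne_zero) x)
    ((hf.p2 (m := 0) (by simp)).continuous.comp (by fun_prop)) (-1) s
  norm_num at h ⊢
  exact h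

lemma continuous_p1_p2_of_contDiff {f : Pt → ℝ} (hf : ContDiff ℝ 2 f) :
    Continuous (p1 f) ∧ Continuous (p2 f) ∧ Continuous (p1 (p2 f)) :=
  ⟨(hf.p1 (m := 1) (by norm_num)).continuous, (hf.p2 (m := 1) (by norm_num)).continuous,
    ((hf.p2 (m := 1) (by norm_num)).p1 (m := 0) (by simp)).continuous⟩

def mixedSobSq (f : Pt → ℝ) : ℝ := L2sq f + L2sq (p1 f) + L2sq (p2 f) + L2sq (p1 (p2 f))

lemma integral_cell_eq_mixedSobSq {f : Pt → ℝ} (hf : ContDiff ℝ 2 f) :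
    ∫ y in cell, (f y ^ 2 + p1 f y ^ 2 + p2 f y ^ 2 + p1 (p2 f) y ^ 2) = mixedSobSq f := by
  have c₀ := hf.continuous
  obtain ⟨c₁, c₂, c₁₂⟩ := continuous_p1_p2_of_contDiff hf
  rw [integral_add (f := fun y => f y ^ 2 + p1 f y ^ 2 + p2 f y ^ 2)
      (Continuous.integrableOn_cell (by fun_prop)) (Continuous.integrableOn_cell (by fun_prop)),
    integral_add (f := fun y => f y ^ 2 + p1 f y ^ 2)
      (Continuous.integrableOn_cell (by fun_prop)) (Continuous.integrableOn_cell (by fun_prop)),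
    integral_add
      (Continuous.integrableOn_cell (by fun_prop)) (Continuous.integrableOn_cell (by fun_prop))]
  rfl

lemma sq_add_sq_p2_le_integral_slice1 {f : Pt → ℝ} (hf : ContDiff ℝ 2 f) (hp : Periodic2 f)
    (x s : ℝ) : (2⁻¹ + 1) * f (x, s) ^ 2 + p2 f (x, s) ^ 2 ≤
      ∫ t in (-1 : ℝ)..1,
        9 / 4 * (f (t, s) ^ 2 + p1 f (t, s) ^ 2 + p2 f (t, s) ^ 2 + p1 (p2 f) (t, s) ^ 2) := by
  have hf₂ : ContDiff ℝ 1 (p2 f) := hf.p2 (by norm_num)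
  have c₀ := hf.continuous
  obtain ⟨c₁, c₂, c₁₂⟩ := continuous_p1_p2_of_contDiff hf
  have h₁ := sq_le_integral_slice1 hp (hf.of_le (by norm_num)) x s
  have h₂ := sq_le_integral_slice1 hp.p2 hf₂ x s
  calc _ ≤ (2⁻¹ + 1) * (∫ t in (-1 : ℝ)..1, ((2⁻¹ + 1) * f (t, s) ^ 2 + p1 f (t, s) ^ 2))
        + ∫ t in (-1 : ℝ)..1, ((2⁻¹ + 1) * p2 f (t, s) ^ 2 + p1 (p2 f) (t, s) ^ 2) := by
        gcongr
    _ = ∫ t in (-1 : ℝ)..1, ((2⁻¹ + 1) * ((2⁻¹ + 1) * f (t, s) ^ 2 + p1 f (t, s) ^ 2)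
        + ((2⁻¹ + 1) * p2 f (t, s) ^ 2 + p1 (p2 f) (t, s) ^ 2)) := by
        rw [← intervalIntegral.integral_const_mul, ← intervalIntegral.integral_add
          (Continuous.intervalIntegrable (by fun_prop) _ _)
          (Continuous.intervalIntegrable (by fun_prop) _ _)]
    _ ≤ _ := by
        refine intervalIntegral.integral_mono_on (by norm_num)
          (Continuous.intervalIntegrable (by fun_prop) _ _)
          (Continuous.intervalIntegrable (by fun_prop) _ _) fun t _ => ?_
        norm_num
        nlinarith [sq_nonneg (p1 f (t, s)), sq_nonneg (p2 f (t, s))]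

lemma sq_le_mixedSobSq {f : Pt → ℝ} (hf : ContDiff ℝ 2 f) (hp : Periodic2 f) (y : Pt) :
    f y ^ 2 ≤ 9 / 4 * mixedSobSq f := by
  obtain ⟨x, s₀⟩ := y
  have c₀ := hf.continuous
  obtain ⟨c₁, c₂, c₁₂⟩ := continuous_p1_p2_of_contDiff hf
  set E : Pt → ℝ := fun y => 9 / 4 * (f y ^ 2 + p1 f y ^ 2 + p2 f y ^ 2 + p1 (p2 f) y ^ 2)
  have hEc : Continuous E := by fun_prop
  have hEint : Continuous fun s : ℝ => ∫ t in (-1 : ℝ)..1, E (t, s) :=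
    intervalIntegral.continuous_parametric_intervalIntegral_of_continuous'
      (f := fun s t => E (t, s)) (hEc.comp continuous_swap) (-1) 1
  calc f (x, s₀) ^ 2 ≤ ∫ s in (-1 : ℝ)..1, ((2⁻¹ + 1) * f (x, s) ^ 2 + p2 f (x, s) ^ 2) :=
        sq_le_integral_slice2 hp (hf.of_le (by norm_num)) x s₀
    _ ≤ ∫ s in (-1 : ℝ)..1, ∫ t in (-1 : ℝ)..1, E (t, s) :=
        intervalIntegral.integral_mono_on (by norm_num)
          (Continuous.intervalIntegrable (by fun_prop) _ _) (hEint.intervalIntegrable _ _)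
          fun s _ => sq_add_sq_p2_le_integral_slice1 hf hp x s
    _ = ∫ y in cell, E y := (integral_cell_eq_intervalIntegral hEc).symm
    _ = 9 / 4 * mixedSobSq f := by
        rw [integral_const_mul, integral_cell_eq_mixedSobSq hf]

lemma mixedSobSq_le_sobSq_add_gradSq (g : Pt → ℝ) :
    mixedSobSq g ≤ sobSq 1 g + gradSq 1 (p2 g) := by
  simp only [mixedSobSq, sobSq, gradSq, pd, Finset.sum_range_succ, Finset.range_one,
    Finset.sum_singleton]
  norm_num
  linarith [show 0 ≤ L2sq (p2 (p2 g)) from integral_nonneg fun y => sq_nonneg _]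

lemma sobSq_add_gradSq_nonneg (g : Pt → ℝ) : 0 ≤ sobSq 1 g + gradSq 1 (p2 g) := by
  simp only [sobSq, gradSq, L2sq]
  positivity

lemma mixedSobSq_le_gradNorm22Sq (φ : Pt → Pt) :
    mixedSobSq (p1 (comp1 φ)) ≤ gradNorm22Sq φ ∧ mixedSobSq (p2 (comp1 φ)) ≤ gradNorm22Sq φ ∧
      mixedSobSq (p1 (comp2 φ)) ≤ gradNorm22Sq φ ∧ mixedSobSq (p2 (comp2 φ)) ≤ gradNorm22Sq φ := by
  have h₁₁ := mixedSobSq_le_sobSq_add_gradSq (p1 (comp1 φ))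
  have h₂₁ := mixedSobSq_le_sobSq_add_gradSq (p2 (comp1 φ))
  have h₁₂ := mixedSobSq_le_sobSq_add_gradSq (p1 (comp2 φ))
  have h₂₂ := mixedSobSq_le_sobSq_add_gradSq (p2 (comp2 φ))
  have n₁₁ := sobSq_add_gradSq_nonneg (p1 (comp1 φ))
  have n₂₁ := sobSq_add_gradSq_nonneg (p2 (comp1 φ))
  have n₁₂ := sobSq_add_gradSq_nonneg (p1 (comp2 φ))
  have n₂₂ := sobSq_add_gradSq_nonneg (p2 (comp2 φ))
  unfold gradNorm22Sq
  refine ⟨?_, ?_, ?_, ?_⟩ <;> linarith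

lemma ContinuousLinearMap.norm_le_norm_apply_add {F : Type*} [NormedAddCommGroup F]
    [NormedSpace ℝ F] (L : ℝ × ℝ →L[ℝ] F) : ‖L‖ ≤ ‖L (1, 0)‖ + ‖L (0, 1)‖ := by
  refine L.opNorm_le_bound (by positivity) fun v => ?_
  have hv : v = v.1 • ((1, 0) : ℝ × ℝ) + v.2 • ((0, 1) : ℝ × ℝ) := by ext <;> simp
  calc ‖L v‖ = ‖v.1 • L (1, 0) + v.2 • L (0, 1)‖ := by
        conv_lhs => rw [hv]
        rw [map_add, map_smul, map_smul]
    _ ≤ ‖v.1‖ * ‖L (1, 0)‖ + ‖v.2‖ * ‖L (0, 1)‖ := by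
        grw [norm_add_le, norm_smul, norm_smul]
    _ ≤ ‖v‖ * ‖L (1, 0)‖ + ‖v‖ * ‖L (0, 1)‖ := by
        gcongr
        exacts [_root_.norm_fst_le v, _root_.norm_snd_le v]
    _ = (‖L (1, 0)‖ + ‖L (0, 1)‖) * ‖v‖ := by ring

lemma fderiv_apply_eq_p1_p2 {φ : Pt → Pt} {x : Pt} (hφ : DifferentiableAt ℝ φ x) :
    fderiv ℝ φ x (1, 0) = (p1 (comp1 φ) x, p1 (comp2 φ) x) ∧
      fderiv ℝ φ x (0, 1) = (p2 (comp1 φ) x, p2 (comp2 φ) x) := by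
  have h := DifferentiableAt.fderiv_prodMk (f₁ := comp1 φ) (f₂ := comp2 φ) hφ.fst hφ.snd
  exact ⟨congrFun (congrArg DFunLike.coe h) (1, 0), congrFun (congrArg DFunLike.coe h) (0, 1)⟩

lemma add_one_mul_add_one_sub_mul_gt_half {a b c d ε : ℝ} (ha : |a| ≤ ε) (hb : |b| ≤ ε)
    (hc : |c| ≤ ε) (hd : |d| ≤ ε) (hε : ε < 1 / 4) : (a + 1) * (d + 1) - b * c > 1 / 2 := by
  have hbc : b * c ≤ ε * ε :=
    calc b * c ≤ |b| * |c| := (le_abs_self _).trans (abs_mul b c).le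
      _ ≤ ε * ε := mul_le_mul hb hc (abs_nonneg c) ((abs_nonneg b).trans hb)
  rw [abs_le] at ha hd
  nlinarith

lemma LipschitzWith.exists_homeomorph_add_id {E : Type*} [NormedAddCommGroup E]
    [NormedSpace ℝ E] [CompleteSpace E] {φ : E → E} {c : NNReal} (hφ : LipschitzWith c φ)
    (hc : c < 1) : ∃ e : E ≃ₜ E, ⇑e = fun y => φ y + y := by
  have happrox : ApproximatesLinearOn (fun y => φ y + y)
      ((ContinuousLinearEquiv.refl ℝ E : E ≃L[ℝ] E) : E →L[ℝ] E) Set.univ c :=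
    fun x _ y _ => by simpa [add_sub_add_comm] using hφ.norm_sub_le x y
  refine ⟨happrox.toHomeomorph _ ?_, rfl⟩
  rcases subsingleton_or_nontrivial E with hE | hE
  · exact Or.inl hE
  · right
    simpa using hc

/-- there is a constant `δ₃ > 0` such that every smooth 2-periodic
map `φ` with `‖∇φ‖_{2,2} ≤ δ₃` satisfies `det(∇φ + I) > 1/2` everywhere, and
`ψ := φ + id` is a `C¹` homeomorphism of `ℝ²` (a `C¹` bijection of `ℝ²` onto itself
with continuous inverse). -/
theorem statement19 :
    ∃ δ₃ : ℝ, 0 < δ₃ ∧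
      ∀ φ : Pt → Pt, ContDiff ℝ (⊤ : ℕ∞) φ →
        Periodic2 (comp1 φ) → Periodic2 (comp2 φ) →
        Real.sqrt (gradNorm22Sq φ) ≤ δ₃ →
        (∀ y : Pt, (p1 (comp1 φ) y + 1) * (p2 (comp2 φ) y + 1)
            - p2 (comp1 φ) y * p1 (comp2 φ) y > 1 / 2) ∧
        Function.Bijective (fun y : Pt => ((φ y).1 + y.1, (φ y).2 + y.2)) ∧
        ContDiff ℝ 1 (fun y : Pt => (((φ y).1 + y.1, (φ y).2 + y.2) : Pt)) ∧
        ∃ g : Pt → Pt, Continuous g ∧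
          Function.LeftInverse g (fun y : Pt => ((φ y).1 + y.1, (φ y).2 + y.2)) ∧
          Function.RightInverse g (fun y : Pt => ((φ y).1 + y.1, (φ y).2 + y.2)) := by
  refine ⟨1 / 10, by norm_num, fun φ hφ hper₁ hper₂ hδ => ?_⟩
  have hG : gradNorm22Sq φ ≤ (1 / 10) ^ 2 := (Real.sqrt_le_iff.1 hδ).2
  have hentry : ∀ g : Pt → ℝ, ContDiff ℝ 2 g → Periodic2 g → mixedSobSq g ≤ gradNorm22Sq φ →
      ∀ y, |g y| ≤ 3 / 20 := fun g hg hp hle y =>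
    -- `(3 / 20) ^ 2 = 9 / 4 * (1 / 10) ^ 2`
    abs_le_of_sq_le_sq (by nlinarith [sq_le_mixedSobSq hg hp y]) (by norm_num)
  obtain ⟨h₁₁, h₂₁, h₁₂, h₂₂⟩ := mixedSobSq_le_gradNorm22Sq φ
  have hφ₃ : ContDiff ℝ 3 φ := hφ.of_le (WithTop.coe_le_coe.2 le_top)
  have e₁₁ := hentry (p1 (comp1 φ)) (hφ₃.fst.p1 (by norm_num)) hper₁.p1 h₁₁
  have e₂₁ := hentry (p2 (comp1 φ)) (hφ₃.fst.p2 (by norm_num)) hper₁.p2 h₂₁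
  have e₁₂ := hentry (p1 (comp2 φ)) (hφ₃.snd.p1 (by norm_num)) hper₂.p1 h₁₂
  have e₂₂ := hentry (p2 (comp2 φ)) (hφ₃.snd.p2 (by norm_num)) hper₂.p2 h₂₂
  have hdiff : Differentiable ℝ φ := hφ₃.differentiable (by norm_num)
  have hlip : LipschitzWith (3 / 10) φ := lipschitzWith_of_nnnorm_fderiv_le hdiff fun x => by
    obtain ⟨h₁₀, h₀₁⟩ := fderiv_apply_eq_p1_p2 (hdiff x)
    have hL := (fderiv ℝ φ x).norm_le_norm_apply_add
    rw [h₁₀, h₀₁, Prod.norm_def, Prod.norm_def] at hL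
    rw [← NNReal.coe_le_coe, coe_nnnorm]
    simp only [Real.norm_eq_abs] at hL
    push_cast
    linarith [max_le (e₁₁ x) (e₁₂ x), max_le (e₂₁ x) (e₂₂ x)]
  obtain ⟨e, he⟩ := hlip.exists_homeomorph_add_id (by norm_num)
  have hψ : ⇑e = fun y : Pt => ((φ y).1 + y.1, (φ y).2 + y.2) := he
  refine ⟨fun y => add_one_mul_add_one_sub_mul_gt_half (e₁₁ y) (e₂₁ y) (e₁₂ y) (e₂₂ y)
    (by norm_num), hψ ▸ e.bijective, (hφ₃.of_le (by norm_num)).add contDiff_id, e.symm, e.symm.continuous,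
    hψ ▸ e.symm_apply_apply, hψ ▸ e.apply_symm_apply⟩
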